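/- In the width-symmetric hierarchical parity model with J_{k,p} = J_k, the free energy density f_n = -β^{-1} 2^{-n} ln Z_n satisfies f_n = f_0 - β^{-1} ∑_{k=1}^n 2^{-k} ln[cosh(βJ_k) + P_{k-1}^2 sinh(βJ_k)], where f_0 = -β^{-1} ln(2 cosh(βJ_0)). -/
import Mathlib

open Real BigOperators Finset

noncomputable section

/-- Map a Boolean spin to ±1. -/
def spin (b : Bool) : ℝ := if b then 1 else -1

/-- Embed index of left half. -/
def finLeft {k : ℕ} (i : Fin (2^k)) : Fin (2^(k+1)) :=
  ⟨i.val, lt_of_lt_of_le i.isLt (Nat.pow_le_pow_right (by norm_num) (Nat.le_succ k))⟩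

/-- Embed index of right half. -/
def finRight {k : ℕ} (i : Fin (2^k)) : Fin (2^(k+1)) :=
  ⟨2^k + i.val, by
    have h := i.isLt
    have h2 : 2^(k+1) = 2^k + 2^k := by rw [pow_succ]; ring
    omega⟩

/-- Parity (product of ±1 spins) of a configuration. -/
def parityProd {m : ℕ} (s : Fin m → Bool) : ℝ := ∏ i, spin (s i)

/-- Hamiltonian of sub-system (k,p) of the hierarchical parity model,
as a function of its own 2^k spins. -/
def Hsub (J : ℕ → ℕ → ℝ) : (k : ℕ) → ℕ → (Fin (2^k) → Bool) → ℝ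
  | 0, p, s => -(J 0 p) * spin (s ⟨0, Nat.two_pow_pos 0⟩)
  | (k+1), p, s =>
      Hsub J k (2*p-1) (fun i => s (finLeft i)) +
      Hsub J k (2*p) (fun i => s (finRight i)) -
      J (k+1) p * parityProd s

/-- Partition function of sub-system (k,p). -/
def Z (J : ℕ → ℕ → ℝ) (β : ℝ) (k p : ℕ) : ℝ :=
  ∑ s : Fin (2^k) → Bool, Real.exp (-β * Hsub J k p s)

/-- Thermal expectation of the parity of sub-system (k,p). -/
def Pexp (J : ℕ → ℕ → ℝ) (β : ℝ) (k p : ℕ) : ℝ :=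
  (∑ s : Fin (2^k) → Bool, parityProd s * Real.exp (-β * Hsub J k p s)) / Z J β k p

/-- Splitting a configuration into halves. -/
def splitEquiv (k : ℕ) : (Fin (2^(k+1)) → Bool) ≃ (Fin (2^k) → Bool) × (Fin (2^k) → Bool) where
  toFun s := (fun i => s (finLeft i), fun i => s (finRight i))
  invFun ab := fun i =>
    if h : i.val < 2^k then ab.1 ⟨i.val, h⟩
    else ab.2 ⟨i.val - 2^k, by
      have := i.isLt
      have h2 : 2^(k+1) = 2^k + 2^k := by rw [pow_succ]; ring
      omega⟩
  left_inv s := by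
    funext i
    dsimp only
    split
    · rfl
    · congr 1
      apply Fin.ext
      simp [finRight]
      omega
  right_inv ab := by
    apply Prod.ext
    · funext i
      simp [finLeft]
    · funext i
      show (if h : 2^k + i.val < 2^k then _ else _) = ab.2 i
      rw [dif_neg (by omega : ¬ 2^k + i.val < 2^k)]
      exact congrArg ab.2 (Fin.ext (by simp [finRight]))

lemma parity_split {k : ℕ} (s : Fin (2^(k+1)) → Bool) :
    parityProd s = parityProd (fun i => s (finLeft i)) * parityProd (fun i => s (finRight i)) := by
  have h : 2^k + 2^k = 2^(k+1) := by rw [pow_succ]; ring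
  unfold parityProd
  rw [← Fintype.prod_equiv (finCongr h) (fun i => spin (s (finCongr h i))) (fun i => spin (s i))
    (fun i => rfl)]
  rw [Fin.prod_univ_add]
  exact congrArg₂ (· * ·) (Finset.prod_congr rfl fun i _ => rfl) (Finset.prod_congr rfl fun i _ => rfl)


lemma parity_sq {m : ℕ} (s : Fin m → Bool) : parityProd s = 1 ∨ parityProd s = -1 := by
  rw [← mul_self_eq_one_iff]
  unfold parityProd
  rw [← Finset.prod_mul_distrib]
  apply Finset.prod_eq_one
  intro i _
  cases s i <;> simp [spin]

lemma exp_pm (x σ : ℝ) (h : σ = 1 ∨ σ = -1) :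
    Real.exp (x * σ) = Real.cosh x + σ * Real.sinh x := by
  rcases h with h | h <;> subst h
  · rw [mul_one, one_mul, Real.cosh_add_sinh]
  · rw [mul_neg_one, neg_one_mul, ← sub_eq_add_neg, Real.cosh_sub_sinh]

lemma Hsub_const (Jh : ℕ → ℝ) : ∀ (k p q : ℕ) (s : Fin (2^k) → Bool),
    Hsub (fun k _ => Jh k) k p s = Hsub (fun k _ => Jh k) k q s := by
  intro k
  induction k with
  | zero => intro p q s; rfl
  | succ k ih =>
    intro p q s
    simp only [Hsub]
    rw [ih (2*p-1) (2*q-1), ih (2*p) (2*q)]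

lemma Z_pos (J : ℕ → ℕ → ℝ) (β : ℝ) (k p : ℕ) : 0 < Z J β k p := by
  apply Finset.sum_pos (fun s _ => Real.exp_pos _)
  exact Finset.univ_nonempty

lemma Z_succ (Jh : ℕ → ℝ) (β : ℝ) (k : ℕ) :
    Z (fun k _ => Jh k) β (k+1) 1 =
      (Real.cosh (β * Jh (k+1)) + (Pexp (fun k _ => Jh k) β k 1)^2 * Real.sinh (β * Jh (k+1)))
        * (Z (fun k _ => Jh k) β k 1)^2 := by
  set J : ℕ → ℕ → ℝ := fun k _ => Jh k with hJ
  set N : ℝ := ∑ s : Fin (2^k) → Bool, parityProd s * Real.exp (-β * Hsub J k 1 s) with hN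
  have key : Z J β (k+1) 1 = Real.cosh (β * Jh (k+1)) * (Z J β k 1)^2
      + Real.sinh (β * Jh (k+1)) * N^2 := by
    rw [Z]
    rw [← Equiv.sum_comp (splitEquiv k).symm (fun s => Real.exp (-β * Hsub J (k+1) 1 s))]
    have hterm : ∀ ab : (Fin (2^k) → Bool) × (Fin (2^k) → Bool),
        Real.exp (-β * Hsub J (k+1) 1 ((splitEquiv k).symm ab)) =
        (Real.cosh (β * Jh (k+1)) + parityProd ab.1 * parityProd ab.2 * Real.sinh (β * Jh (k+1)))
          * (Real.exp (-β * Hsub J k 1 ab.1) * Real.exp (-β * Hsub J k 1 ab.2)) := by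
      intro ab
      have hL : (fun i => (splitEquiv k).symm ab (finLeft i)) = ab.1 := by
        have := congrArg Prod.fst ((splitEquiv k).right_inv ab)
        exact this
      have hR : (fun i => (splitEquiv k).symm ab (finRight i)) = ab.2 := by
        have := congrArg Prod.snd ((splitEquiv k).right_inv ab)
        exact this
      have hpar : parityProd ((splitEquiv k).symm ab) = parityProd ab.1 * parityProd ab.2 := by
        rw [parity_split, hL, hR]
      simp only [Hsub]
      rw [hL, hR, hpar]
      rw [Hsub_const Jh k (2*1-1) 1, Hsub_const Jh k (2*1) 1]
      have hσ : parityProd ab.1 * parityProd ab.2 = 1 ∨ parityProd ab.1 * parityProd ab.2 = -1 := by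
        rcases parity_sq ab.1 with h1 | h1 <;> rcases parity_sq ab.2 with h2 | h2 <;>
          rw [h1, h2] <;> norm_num
      have : -β * (Hsub J k 1 ab.1 + Hsub J k 1 ab.2 - J (k+1) 1 * (parityProd ab.1 * parityProd ab.2))
          = -β * Hsub J k 1 ab.1 + -β * Hsub J k 1 ab.2
            + (β * Jh (k+1)) * (parityProd ab.1 * parityProd ab.2) := by
        simp only [hJ]; ring
      rw [this, Real.exp_add, Real.exp_add, exp_pm _ _ hσ]
      ring
    rw [Finset.sum_congr rfl (fun ab _ => hterm ab)]
    rw [Fintype.sum_prod_type]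
    have expand : ∀ a b : Fin (2^k) → Bool,
        (Real.cosh (β * Jh (k+1)) + parityProd a * parityProd b * Real.sinh (β * Jh (k+1))) *
          (Real.exp (-β * Hsub J k 1 a) * Real.exp (-β * Hsub J k 1 b))
        = Real.cosh (β * Jh (k+1)) * (Real.exp (-β * Hsub J k 1 a) * Real.exp (-β * Hsub J k 1 b))
          + Real.sinh (β * Jh (k+1)) * ((parityProd a * Real.exp (-β * Hsub J k 1 a)) *
              (parityProd b * Real.exp (-β * Hsub J k 1 b))) := by
      intro a b; ring
    rw [Finset.sum_congr rfl (fun a _ => Finset.sum_congr rfl (fun b _ => expand a b))]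
    simp_rw [Finset.sum_add_distrib]
    simp_rw [← Finset.mul_sum]
    rw [← Finset.sum_mul, ← Finset.sum_mul]
    have hZdef : (∑ s : Fin (2^k) → Bool, Real.exp (-β * Hsub J k 1 s)) = Z J β k 1 := rfl
    rw [hZdef, ← hN]
    ring
  rw [key]
  have hZ := Z_pos J β k 1
  have hP : Pexp J β k 1 * Z J β k 1 = N := by
    rw [Pexp, div_mul_cancel₀ _ (ne_of_gt hZ), hN]
  have : N^2 = (Pexp J β k 1)^2 * (Z J β k 1)^2 := by
    rw [← hP]; ring
  rw [this]
  ring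

lemma Z_zero (Jh : ℕ → ℝ) (β : ℝ) :
    Z (fun k _ => Jh k) β 0 1 = 2 * Real.cosh (β * Jh 0) := by
  haveI : Unique (Fin (2^0)) := ⟨⟨⟨0, Nat.one_pos⟩⟩, fun a => Fin.ext (by omega)⟩
  rw [Z]
  rw [← Equiv.sum_comp (Equiv.funUnique (Fin (2^0)) Bool).symm]
  rw [Fintype.sum_bool]
  simp only [Hsub, Equiv.funUnique, Equiv.coe_fn_symm_mk, spin, if_true, if_false,
    Equiv.symm, Equiv.coe_fn_mk]
  rw [Real.cosh_eq]
  simp only [Equiv.piUnique, Equiv.invFun_as_coe, Equiv.coe_fn_symm_mk, Function.const]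
  norm_num
  rw [Real.exp_neg]
  ring

lemma coshP_pos (Jh : ℕ → ℝ) (β : ℝ) (k : ℕ) :
    0 < Real.cosh (β * Jh (k+1)) +
      (Pexp (fun k _ => Jh k) β k 1)^2 * Real.sinh (β * Jh (k+1)) := by
  have h := Z_succ Jh β k
  have hZ1 := Z_pos (fun k _ => Jh k) β (k+1) 1
  have hZ0 := Z_pos (fun k _ => Jh k) β k 1
  have hsq : 0 < (Z (fun k _ => Jh k) β k 1)^2 := by positivity
  nlinarith [h, hZ1, hsq]

/-- free energy density of the width-symmetric model as a
geometrically weighted sum. -/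
theorem width_symmetric_free_energy (Jh : ℕ → ℝ) (β : ℝ) (hβ : 0 < β) (n : ℕ) :
    -(β⁻¹) * ((2:ℝ)^n)⁻¹ * Real.log (Z (fun k _ => Jh k) β n 1) =
      -(β⁻¹) * Real.log (2 * Real.cosh (β * Jh 0)) -
      β⁻¹ * ∑ k ∈ Finset.range n, ((2:ℝ)^(k+1))⁻¹ *
        Real.log (Real.cosh (β * Jh (k+1)) +
          (Pexp (fun k _ => Jh k) β k 1)^2 * Real.sinh (β * Jh (k+1))) := by
  induction n with
  | zero =>
    rw [Z_zero]
    simp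
  | succ n ih =>
    rw [Finset.sum_range_succ]
    rw [Z_succ Jh β n]
    have h1 := coshP_pos Jh β n
    have h2 := Z_pos (fun k _ => Jh k) β n 1
    rw [Real.log_mul (ne_of_gt h1) (by positivity), Real.log_pow]
    push_cast
    linear_combination ih
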